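/- The point 0 ∈ ℝ^d is a global minimizer of f if and only if ‖S(z, tλ)‖₂ ≤ tμ. -/

import Mathlib

/-!
Write `s = S(z, tλ)` and `r = z - s`. Componentwise `|rᵢ| ≤ tλ` and `sᵢ rᵢ = tλ |sᵢ|`, i.e.
`r` lies in `tλ ∂‖·‖₁(s)`. Expanding the square,
`2t (f β - f 0) = ‖β‖² - 2⟪β, z⟫ + 2t (λ‖β‖₁ + μ‖β‖)`.
If `‖s‖ ≤ tμ`, splitting `⟪β, z⟫ = ⟪β, r⟫ + ⟪β, s⟫` bounds this below by `‖β‖² ≥ 0`.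
If `‖s‖ > tμ`, then along `β = ε s` with `ε‖s‖ = ‖s‖ - tμ` the `ℓ¹` terms cancel exactly and the
difference is `-ε‖s‖ (‖s‖ - tμ) < 0`.
-/

open Finset
open scoped RealInnerProductSpace

noncomputable def softThreshold (a c : ℝ) : ℝ := Real.sign a * max (|a| - c) 0

lemma softThreshold_cases {c : ℝ} (hc : 0 ≤ c) (a : ℝ) :
    (a ≤ -c ∧ softThreshold a c = a + c) ∨ (|a| ≤ c ∧ softThreshold a c = 0) ∨
      (c ≤ a ∧ softThreshold a c = a - c) := by
  unfold softThreshold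
  rcases le_or_gt |a| c with h | h
  · exact Or.inr (Or.inl ⟨h, by rw [max_eq_right (by linarith), mul_zero]⟩)
  rcases lt_abs.mp h with h' | h'
  · right; right
    have ha : 0 < a := by linarith
    refine ⟨h'.le, ?_⟩
    rw [Real.sign_of_pos ha, abs_of_pos ha, max_eq_left (by linarith), one_mul]
  · left
    have ha : a < 0 := by linarith
    refine ⟨by linarith, ?_⟩
    rw [Real.sign_of_neg ha, abs_of_neg ha, max_eq_left (by linarith)]
    ring

lemma abs_sub_softThreshold_le {c : ℝ} (hc : 0 ≤ c) (a : ℝ) :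
    |a - softThreshold a c| ≤ c := by
  rcases softThreshold_cases hc a with ⟨-, h⟩ | ⟨ha, h⟩ | ⟨-, h⟩ <;> rw [h]
  · rw [show a - (a + c) = -c by ring, abs_neg, abs_of_nonneg hc]
  · rwa [sub_zero]
  · rw [sub_sub_cancel, abs_of_nonneg hc]

lemma softThreshold_mul_sub_eq {c : ℝ} (hc : 0 ≤ c) (a : ℝ) :
    softThreshold a c * (a - softThreshold a c) = c * |softThreshold a c| := by
  rcases softThreshold_cases hc a with ⟨ha, h⟩ | ⟨-, h⟩ | ⟨ha, h⟩ <;> rw [h]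
  · rw [abs_of_nonpos (by linarith)]; ring
  · simp
  · rw [abs_of_nonneg (by linarith)]; ring

section EuclideanSpace

variable {ι : Type*} [Fintype ι]

lemma inner_le_mul_sum_abs_of_abs_le {c : ℝ} {r : EuclideanSpace ℝ ι} (hr : ∀ i, |r i| ≤ c)
    (β : EuclideanSpace ℝ ι) : ⟪β, r⟫ ≤ c * ∑ i, |β i| := by
  rw [PiLp.inner_apply, mul_sum]
  refine sum_le_sum fun i _ => ?_
  calc ⟪β i, r i⟫ = r i * β i := rfl
    _ ≤ |r i| * |β i| := abs_mul (r i) (β i) ▸ le_abs_self _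
    _ ≤ c * |β i| := mul_le_mul_of_nonneg_right (hr i) (abs_nonneg _)

lemma inner_eq_mul_sum_abs_of_mul_eq {c : ℝ} {s r : EuclideanSpace ℝ ι}
    (hsr : ∀ i, s i * r i = c * |s i|) : ⟪s, r⟫ = c * ∑ i, |s i| := by
  rw [PiLp.inner_apply, mul_sum]
  exact sum_congr rfl fun i _ => (mul_comm _ _).trans (hsr i)

noncomputable def sparseGroupProxObjective (t lam mu : ℝ) (z β : EuclideanSpace ℝ ι) : ℝ :=
  1 / (2 * t) * ‖β - z‖ ^ 2 + lam * ∑ i, |β i| + mu * ‖β‖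

variable {t lam mu : ℝ} {z : EuclideanSpace ℝ ι}

lemma two_mul_sparseGroupProxObjective_sub_zero (ht : t ≠ 0) (β : EuclideanSpace ℝ ι) :
    2 * t * (sparseGroupProxObjective t lam mu z β - sparseGroupProxObjective t lam mu z 0) =
      ‖β‖ ^ 2 - 2 * ⟪β, z⟫ + 2 * t * (lam * ∑ i, |β i| + mu * ‖β‖) := by
  simp only [sparseGroupProxObjective, norm_sub_sq_real, zero_sub, norm_neg,
    PiLp.zero_apply, abs_zero, sum_const_zero, norm_zero]
  field_simp
  ring

lemma sparseGroupProxObjective_zero_le_iff (ht : 0 < t) (β : EuclideanSpace ℝ ι) :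
    sparseGroupProxObjective t lam mu z 0 ≤ sparseGroupProxObjective t lam mu z β ↔
      2 * ⟪β, z⟫ ≤ ‖β‖ ^ 2 + 2 * t * (lam * ∑ i, |β i| + mu * ‖β‖) := by
  rw [← sub_nonneg, ← mul_nonneg_iff_of_pos_left (by positivity : 0 < 2 * t),
    two_mul_sparseGroupProxObjective_sub_zero ht.ne']
  constructor <;> intro h <;> linarith

variable {s : EuclideanSpace ℝ ι}

lemma sparseGroupProxObjective_zero_le (ht : 0 < t) (hr : ∀ i, |z i - s i| ≤ t * lam)
    (hs : ‖s‖ ≤ t * mu) (β : EuclideanSpace ℝ ι) :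
    sparseGroupProxObjective t lam mu z 0 ≤ sparseGroupProxObjective t lam mu z β := by
  rw [sparseGroupProxObjective_zero_le_iff ht]
  have hβz : ⟪β, z⟫ ≤ t * lam * ∑ i, |β i| + t * mu * ‖β‖ :=
    calc ⟪β, z⟫ = ⟪β, z - s⟫ + ⟪β, s⟫ := by rw [inner_sub_right]; ring
      _ ≤ t * lam * ∑ i, |β i| + ‖β‖ * ‖s‖ :=
        add_le_add (inner_le_mul_sum_abs_of_abs_le (r := z - s) hr β) (real_inner_le_norm _ _)
      _ ≤ t * lam * ∑ i, |β i| + t * mu * ‖β‖ := by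
        rw [mul_comm (t * mu)]; gcongr
  linarith [sq_nonneg ‖β‖]

lemma exists_sparseGroupProxObjective_lt_zero (ht : 0 < t) (hmu : 0 ≤ mu)
    (hsr : ∀ i, s i * (z i - s i) = t * lam * |s i|) (hs : t * mu < ‖s‖) :
    ∃ β, sparseGroupProxObjective t lam mu z β < sparseGroupProxObjective t lam mu z 0 := by
  have hs_pos : 0 < ‖s‖ := lt_of_le_of_lt (by positivity) hs
  set ε := (‖s‖ - t * mu) / ‖s‖
  have hε : 0 < ε := div_pos (by linarith) hs_pos
  have hεs : ε * ‖s‖ = ‖s‖ - t * mu := div_mul_cancel₀ _ hs_pos.ne'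
  have hsz : ⟪s, z⟫ = ‖s‖ ^ 2 + t * lam * ∑ i, |s i| := by
    rw [← inner_eq_mul_sum_abs_of_mul_eq (r := z - s) hsr, inner_sub_right,
      real_inner_self_eq_norm_sq]
    ring
  refine ⟨ε • s, ?_⟩
  rw [← not_le, sparseGroupProxObjective_zero_le_iff ht, not_le]
  simp only [real_inner_smul_left, norm_smul, PiLp.smul_apply, smul_eq_mul, abs_mul,
    ← mul_sum, Real.norm_of_nonneg hε.le, abs_of_pos hε, hsz]
  nlinarith [mul_pos hε (sub_pos.mpr hs)]

end EuclideanSpace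

/-- `0` globally minimizes
`f(β) = (1/(2t))‖β − z‖₂² + λ‖β‖₁ + μ‖β‖₂` iff `‖S(z, tλ)‖₂ ≤ tμ`,
where `S(·,·)` is componentwise soft-thresholding. -/
theorem zero_minimizer_iff_soft_threshold_small
    (d : ℕ) (z : EuclideanSpace ℝ (Fin d)) (t lam mu : ℝ)
    (ht : 0 < t) (hlam : 0 ≤ lam) (hmu : 0 ≤ mu)
    (f : EuclideanSpace ℝ (Fin d) → ℝ)
    (hf : ∀ β, f β = 1 / (2 * t) * ‖β - z‖ ^ 2 + lam * ∑ i, |β i| + mu * ‖β‖)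
    (soft : EuclideanSpace ℝ (Fin d))
    (hsoft : ∀ i, soft i = Real.sign (z i) * max (|z i| - t * lam) 0) :
    (∀ β, f 0 ≤ f β) ↔ ‖soft‖ ≤ t * mu := by
  obtain rfl : f = sparseGroupProxObjective t lam mu z := funext hf
  replace hsoft : ∀ i, soft i = softThreshold (z i) (t * lam) := hsoft
  have htlam : 0 ≤ t * lam := mul_nonneg ht.le hlam
  have hres_abs : ∀ i, |z i - soft i| ≤ t * lam := fun i => by
    rw [hsoft]; exact abs_sub_softThreshold_le htlam (z i)
  have hres_mul : ∀ i, soft i * (z i - soft i) = t * lam * |soft i| := fun i => by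
    rw [hsoft]; exact softThreshold_mul_sub_eq htlam (z i)
  constructor
  · intro hmin
    by_contra! hlt
    obtain ⟨β, hβ⟩ := exists_sparseGroupProxObjective_lt_zero ht hmu hres_mul hlt
    exact (hmin β).not_gt hβ
  · exact sparseGroupProxObjective_zero_le ht hres_abs
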